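/- Fix a real g > 0 and positive integers a, b; set ω₁ = a·g, ω₂ = b·g, T = 2π/g, and for a positive integer M let t_i = T(i−1)/M for i = 1, …, M. Let p be a positive integer, assume M > 2p·max(a, b), and let m, n be integers with |m| + |n| ≤ p and m·a + n·b ≠ 0. Then (2/M)·∑_{i=1}^{M} cos²((m ω₁ + n ω₂) t_i) = 1 and (2/M)·∑_{i=1}^{M} sin²((m ω₁ + n ω₂) t_i) = 1. -/

import Mathlib

/-!
With `k = m a + n b`, the nodes give the angles `2π k j / M`, `j = 0, …, M-1`. By the double-angle
formula both sums equal `M/2 ± (1/2) ∑ⱼ cos (2π (2k) j / M)`, and this last sum is the real part of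
the geometric sum of the `M`-th root of unity `exp (2πi (2k)/M)`, which vanishes because
`0 < |2k| ≤ 2p max(a, b) < M`, so `M ∤ 2k`.
-/

open Real

theorem Complex.exp_two_pi_I_mul_div_ne_one {M : ℕ} {k : ℤ} (hM : M ≠ 0) (h : ¬ (M : ℤ) ∣ k) :
    Complex.exp (2 * π * Complex.I * k / M) ≠ 1 := by
  rw [Ne, Complex.exp_eq_one_iff]
  rintro ⟨c, hc⟩
  have hM : (M : ℂ) ≠ 0 := by exact_mod_cast hM
  field_simp at hc
  exact h ⟨c, by exact_mod_cast hc⟩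

theorem Complex.sum_range_exp_two_pi_I_mul_div_eq_zero {M : ℕ} {k : ℤ} (h : ¬ (M : ℤ) ∣ k) :
    ∑ j ∈ Finset.range M, Complex.exp (2 * π * Complex.I * k * j / M) = 0 := by
  rcases eq_or_ne M 0 with rfl | hM
  · simp
  set z := Complex.exp (2 * π * Complex.I * k / M)
  have hpow : ∀ j : ℕ, Complex.exp (2 * π * Complex.I * k * j / M) = z ^ j := fun j => by
    rw [← Complex.exp_nat_mul]; ring_nf
  have hzM : z ^ M = 1 := by
    rw [← hpow, mul_div_assoc, div_self (by exact_mod_cast hM), mul_one, mul_comm,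
      Complex.exp_int_mul_two_pi_mul_I]
  simp only [hpow]
  rw [geom_sum_eq (Complex.exp_two_pi_I_mul_div_ne_one hM h), hzM, sub_self, zero_div]

theorem Real.sum_range_cos_two_pi_mul_div_eq_zero {M : ℕ} {k : ℤ} (h : ¬ (M : ℤ) ∣ k) :
    ∑ j ∈ Finset.range M, cos (2 * π * k * j / M) = 0 := by
  have := congrArg Complex.re (Complex.sum_range_exp_two_pi_I_mul_div_eq_zero h)
  rw [Complex.re_sum, Complex.zero_re] at this
  convert this using 2 with j
  rw [← Complex.exp_ofReal_mul_I_re]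
  push_cast; ring_nf

theorem Real.sum_range_cos_sq_two_pi_mul_div {M : ℕ} {k : ℤ} (h : ¬ (M : ℤ) ∣ 2 * k) :
    ∑ j ∈ Finset.range M, cos (2 * π * k * j / M) ^ 2 = M / 2 := by
  have hsum := sum_range_cos_two_pi_mul_div_eq_zero h
  push_cast at hsum
  have hdouble : ∀ j : ℕ, cos (2 * π * k * j / M) ^ 2 = 1 / 2 + cos (2 * π * (2 * k) * j / M) / 2 :=
    fun j => by rw [cos_sq]; ring_nf
  simp only [hdouble, Finset.sum_add_distrib, ← Finset.sum_div, hsum, Finset.sum_const,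
    Finset.card_range, nsmul_eq_mul]
  ring

theorem Real.sum_range_sin_sq_two_pi_mul_div {M : ℕ} {k : ℤ} (h : ¬ (M : ℤ) ∣ 2 * k) :
    ∑ j ∈ Finset.range M, sin (2 * π * k * j / M) ^ 2 = M / 2 := by
  simp only [sin_sq, Finset.sum_sub_distrib, sum_range_cos_sq_two_pi_mul_div h, Finset.sum_const,
    Finset.card_range, nsmul_eq_mul, mul_one]
  ring

theorem Finset.sum_Icc_one_eq_sum_range {β : Type*} [AddCommMonoid β] (f : ℕ → β) (n : ℕ) :
    ∑ i ∈ Finset.Icc 1 n, f i = ∑ j ∈ Finset.range n, f (j + 1) := by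
  rw [Finset.range_eq_Ico, Finset.sum_Ico_add' f 0 n 1]
  rfl

theorem Int.natAbs_mul_add_mul_le (m n : ℤ) (a b : ℕ) :
    (m * a + n * b).natAbs ≤ (m.natAbs + n.natAbs) * max a b :=
  calc (m * a + n * b).natAbs ≤ m.natAbs * a + n.natAbs * b := by
        simpa [Int.natAbs_mul] using Int.natAbs_add_le (m * a) (n * b)
    _ ≤ m.natAbs * max a b + n.natAbs * max a b := by gcongr <;> omega
    _ = (m.natAbs + n.natAbs) * max a b := by ring

theorem Int.not_dvd_of_ne_zero_of_natAbs_lt {M : ℕ} {k : ℤ} (hk : k ≠ 0) (hlt : k.natAbs < M) :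
    ¬ (M : ℤ) ∣ k :=
  fun hdvd => hk (Int.eq_zero_of_dvd_of_natAbs_lt_natAbs hdvd hlt)

theorem RMHB_discrete_diag_one_general (g : ℝ) (hg : 0 < g) (a b : ℕ)
    (p M : ℕ)
    (hM : 2 * p * max a b < M)
    (m n : ℤ) (hmn : m.natAbs + n.natAbs ≤ p)
    (hne : m * (a : ℤ) + n * (b : ℤ) ≠ 0) :
    (2 / (M : ℝ)) * ∑ i ∈ Finset.Icc 1 M,
        (Real.cos (((m : ℝ) * ((a : ℝ) * g) + (n : ℝ) * ((b : ℝ) * g)) *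
            ((2 * π / g) * ((i : ℝ) - 1) / M))) ^ 2 = 1 ∧
    (2 / (M : ℝ)) * ∑ i ∈ Finset.Icc 1 M,
        (Real.sin (((m : ℝ) * ((a : ℝ) * g) + (n : ℝ) * ((b : ℝ) * g)) *
            ((2 * π / g) * ((i : ℝ) - 1) / M))) ^ 2 = 1 := by
  set k : ℤ := m * a + n * b with hk
  have hM0 : (M : ℝ) ≠ 0 := Nat.cast_ne_zero.mpr (by omega)
  have hndvd : ¬ (M : ℤ) ∣ 2 * k := by
    refine Int.not_dvd_of_ne_zero_of_natAbs_lt (mul_ne_zero two_ne_zero hne) ?_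
    have hk_le : k.natAbs ≤ p * max a b :=
      (Int.natAbs_mul_add_mul_le m n a b).trans (Nat.mul_le_mul_right _ hmn)
    rw [mul_assoc] at hM
    rw [Int.natAbs_mul]
    change 2 * k.natAbs < M
    linarith
  have hnodes : ∀ j : ℕ, ((m : ℝ) * ((a : ℝ) * g) + (n : ℝ) * ((b : ℝ) * g)) *
      ((2 * π / g) * (((j + 1 : ℕ) : ℝ) - 1) / M) = 2 * π * k * j / M := fun j => by
    push_cast [hk]
    field_simp
    ring
  rw [Finset.sum_Icc_one_eq_sum_range, Finset.sum_Icc_one_eq_sum_range]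
  simp only [hnodes]
  rw [sum_range_cos_sq_two_pi_mul_div hndvd, sum_range_sin_sq_two_pi_mul_div hndvd]
  constructor <;> field_simp

/-- Theorem 2, condition (a), diagonal part: with `ω₁ = a g`, `ω₂ = b g`,
sampling period `T = 2π/g`, nodes `t_i = T(i-1)/M`, truncation order `p`, and
`M > 2 p max(a,b)`, the diagonal discrete Galerkin products of nonconstant
truncation harmonics equal `1` exactly. -/
theorem RMHB_discrete_diag_one (g : ℝ) (hg : 0 < g) (a b : ℕ)
    (ha : 0 < a) (hb : 0 < b) (p M : ℕ) (hp : 0 < p)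
    (hM : 2 * p * max a b < M)
    (m n : ℤ) (hmn : m.natAbs + n.natAbs ≤ p)
    (hne : m * (a : ℤ) + n * (b : ℤ) ≠ 0) :
    (2 / (M : ℝ)) * ∑ i ∈ Finset.Icc 1 M,
        (Real.cos (((m : ℝ) * ((a : ℝ) * g) + (n : ℝ) * ((b : ℝ) * g)) *
            ((2 * π / g) * ((i : ℝ) - 1) / M))) ^ 2 = 1 ∧
    (2 / (M : ℝ)) * ∑ i ∈ Finset.Icc 1 M,
        (Real.sin (((m : ℝ) * ((a : ℝ) * g) + (n : ℝ) * ((b : ℝ) * g)) *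
            ((2 * π / g) * ((i : ℝ) - 1) / M))) ^ 2 = 1 :=
  RMHB_discrete_diag_one_general g hg a b p M hM m n hmn hne
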